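/- A projectivity between distinct ranges with a fixed point is a perspectivity: Let π be a projectivity from the range of a line l to the range of a distinct line m, and suppose the common point l·m is fixed by π. Then π is a perspectivity: there exists a point O outside both l and m such that π(X) = (OX)·m for every point X on l. -/

import Mathlib

open Configuration

universe u
variable (P L : Type u) [Membership P L]

/-- Three points are collinear if some line passes through all three. -/
def Col (A B C : P) : Prop := ∃ l : L, A ∈ l ∧ B ∈ l ∧ C ∈ l

/-- Every line of `L` is incident with at least `n` distinct points. -/
def LinesHaveAtLeast (n : ℕ) : Prop :=
  ∀ l : L, ∃ s : Finset P, n ≤ s.card ∧ ∀ X ∈ s, X ∈ l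

/-- The range of a line `l` : the points incident with `l`. -/
abbrev Rng (l : L) : Type _ := {X : P // X ∈ l}

/-- `f` is the perspectivity from the range of `l` to the range of `m` with
center `O`, a point outside both `l` and `m` : each point `X` of `l` is mapped
to the point `(OX)·m`, i.e. `O`, `X` and `f X` are collinear. -/
def IsPerspectivity (l m : L) (f : Rng P L l → Rng P L m) : Prop :=
  ∃ O : P, O ∉ l ∧ O ∉ m ∧
    ∀ X : Rng P L l, ∃ k : L, O ∈ k ∧ (X : P) ∈ k ∧ ((f X : P)) ∈ k

/-- A projectivity between ranges of lines : a composite of finitely many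
perspectivities. -/
inductive IsProjectivity : (l m : L) → (Rng P L l → Rng P L m) → Prop where
  | persp {l m : L} {f : Rng P L l → Rng P L m} :
      IsPerspectivity P L l m f → IsProjectivity l m f
  | comp {l m n : L} {f : Rng P L l → Rng P L m} {g : Rng P L m → Rng P L n} :
      IsProjectivity l m f → IsProjectivity m n g → IsProjectivity l n (g ∘ f)

/-- The pencil of a point `U` : the lines incident with `U`. -/
abbrev Pcl (U : P) : Type _ := {k : L // U ∈ k}

/-- `f` is the perspectivity from the pencil of `U` to the pencil of `V` with
axis `a`, a line avoiding both `U` and `V` : each line `k` through `U` is mapped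
to the line joining `V` to `k·a`, i.e. `k`, `a` and `f k` are concurrent. -/
def IsPencilPerspectivity (U V : P) (f : Pcl P L U → Pcl P L V) : Prop :=
  ∃ a : L, U ∉ a ∧ V ∉ a ∧
    ∀ k : Pcl P L U, ∃ X : P, X ∈ (k : L) ∧ X ∈ a ∧ X ∈ ((f k : L))

/-- A projectivity between pencils of points : a composite of finitely many
perspectivities between pencils. -/
inductive IsPencilProjectivity : (U V : P) → (Pcl P L U → Pcl P L V) → Prop where
  | persp {U V : P} {f : Pcl P L U → Pcl P L V} :
      IsPencilPerspectivity P L U V f → IsPencilProjectivity U V f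
  | comp {U V W : P} {f : Pcl P L U → Pcl P L V} {g : Pcl P L V → Pcl P L W} :
      IsPencilProjectivity U V f → IsPencilProjectivity V W g →
      IsPencilProjectivity U W (g ∘ f)

/-- Axiom T: every projectivity of the range of a line (or of the pencil of
lines through a point) onto itself having three distinct fixed elements is the
identity. -/
def AxiomT : Prop :=
  (∀ (l : L) (f : Rng P L l → Rng P L l), IsProjectivity P L l l f →
    (∃ X Y Z : Rng P L l, X ≠ Y ∧ X ≠ Z ∧ Y ≠ Z ∧ f X = X ∧ f Y = Y ∧ f Z = Z) →
    ∀ W, f W = W) ∧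
  (∀ (U : P) (g : Pcl P L U → Pcl P L U), IsPencilProjectivity P L U U g →
    (∃ x y z : Pcl P L U, x ≠ y ∧ x ≠ z ∧ y ≠ z ∧ g x = x ∧ g y = y ∧ g z = z) →
    ∀ w, g w = w)

/-!
Pick two further points `A`, `B` on `l` and let `S` be the meeting point of `A f(A)` and
`B f(B)`, and let `g` project `m` back onto `l` from `S`. Then `g ∘ f` is a projectivity of `l`
onto itself fixing `A`, `B` and `l·m`, so it is the identity by Axiom T; hence `X`, `f X` and `S`
are collinear for every `X`, i.e. `f` is the perspectivity with center `S`.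
-/

variable {P L}

section Nondegenerate

variable [Configuration.Nondegenerate P L]

theorem point_eq_of_mem_of_line_ne {p q : P} {l₁ l₂ : L} (h : l₁ ≠ l₂)
    (hp₁ : p ∈ l₁) (hp₂ : p ∈ l₂) (hq₁ : q ∈ l₁) (hq₂ : q ∈ l₂) : p = q :=
  (Nondegenerate.eq_or_eq hp₁ hq₁ hp₂ hq₂).resolve_right h

theorem line_eq_of_mem_of_point_ne {p q : P} {l₁ l₂ : L} (h : p ≠ q)
    (hp₁ : p ∈ l₁) (hq₁ : q ∈ l₁) (hp₂ : p ∈ l₂) (hq₂ : q ∈ l₂) : l₁ = l₂ :=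
  (Nondegenerate.eq_or_eq hp₁ hq₁ hp₂ hq₂).resolve_left h

theorem val_notMem_of_ne_inter {l m : L} (hlm : l ≠ m) {O : P} (hOl : O ∈ l) (hOm : O ∈ m)
    {X : Rng P L l} (hX : X ≠ ⟨O, hOl⟩) : (X : P) ∉ m :=
  fun hXm => hX (Subtype.ext (point_eq_of_mem_of_line_ne hlm X.2 hXm hOl hOm))

theorem IsPerspectivity.injective {l m : L} {f : Rng P L l → Rng P L m}
    (hf : IsPerspectivity P L l m f) : Function.Injective f := by
  obtain ⟨S, hSl, hSm, hS⟩ := hf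
  intro X Y hXY
  by_contra hne
  obtain ⟨k₁, hSk₁, hXk₁, hfXk₁⟩ := hS X
  obtain ⟨k₂, hSk₂, hYk₂, hfYk₂⟩ := hS Y
  have hk : k₁ ≠ k₂ := by
    rintro rfl
    exact hSl (line_eq_of_mem_of_point_ne (Subtype.coe_ne_coe.mpr hne) hXk₁ hYk₂ X.2 Y.2 ▸ hSk₁)
  rw [← hXY] at hfYk₂
  exact hSm (point_eq_of_mem_of_line_ne hk hSk₁ hSk₂ hfXk₁ hfYk₂ ▸ (f X).2)

theorem IsProjectivity.injective {l m : L} {f : Rng P L l → Rng P L m}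
    (hf : IsProjectivity P L l m f) : Function.Injective f := by
  induction hf with
  | persp h => exact h.injective
  | comp _ _ ih₁ ih₂ => exact ih₂.comp ih₁

end Nondegenerate

theorem IsPerspectivity.of_leftInverse {l m : L} {f : Rng P L l → Rng P L m}
    {g : Rng P L m → Rng P L l} (hg : IsPerspectivity P L m l g)
    (hgf : Function.LeftInverse g f) : IsPerspectivity P L l m f := by
  obtain ⟨S, hSm, hSl, hS⟩ := hg
  refine ⟨S, hSl, hSm, fun X => ?_⟩
  obtain ⟨k, hSk, hfXk, hgfXk⟩ := hS (f X)
  exact ⟨k, hSk, hgf X ▸ hgfXk, hfXk⟩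

theorem LinesHaveAtLeast.exists_two_ne {n : ℕ} (h : LinesHaveAtLeast P L n) (hn : 3 ≤ n)
    {l : L} (X : Rng P L l) : ∃ A B : Rng P L l, A ≠ B ∧ A ≠ X ∧ B ≠ X := by
  classical
  obtain ⟨s, hs, hsl⟩ := h l
  have hcard : 1 < (s.erase X).card := by
    have := Finset.pred_card_le_card_erase (a := (X : P)) (s := s)
    omega
  obtain ⟨A, hA, B, hB, hAB⟩ := Finset.one_lt_card.mp hcard
  exact ⟨⟨A, hsl A (Finset.mem_of_mem_erase hA)⟩, ⟨B, hsl B (Finset.mem_of_mem_erase hB)⟩,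
    Subtype.coe_ne_coe.mp hAB, Subtype.coe_ne_coe.mp (Finset.ne_of_mem_erase hA),
    Subtype.coe_ne_coe.mp (Finset.ne_of_mem_erase hB)⟩

section ProjectivePlane

variable [Configuration.ProjectivePlane P L]

open Configuration.HasPoints Configuration.HasLines

section Perspectivity

variable {l m : L} {S : P}

noncomputable def perspectivity (hSl : S ∉ l) (hSm : S ∉ m) : Rng P L l → Rng P L m := fun X =>
  have hSX : S ≠ X := (ne_of_mem_of_not_mem X.2 hSl).symm
  ⟨mkPoint (ne_of_mem_of_not_mem' (mkLine_ax hSX).1 hSm),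
    (mkPoint_ax (ne_of_mem_of_not_mem' (mkLine_ax hSX).1 hSm)).2⟩

variable (hSl : S ∉ l) (hSm : S ∉ m)

theorem isPerspectivity_perspectivity : IsPerspectivity P L l m (perspectivity hSl hSm) := by
  refine ⟨S, hSl, hSm, fun X => ?_⟩
  have hSX : S ≠ X := (ne_of_mem_of_not_mem X.2 hSl).symm
  exact ⟨mkLine hSX, (mkLine_ax hSX).1, (mkLine_ax hSX).2,
    (mkPoint_ax (ne_of_mem_of_not_mem' (mkLine_ax hSX).1 hSm)).1⟩

theorem perspectivity_eq_of_col {X : Rng P L l} {Y : Rng P L m} (h : Col P L S X Y) :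
    perspectivity hSl hSm X = Y := by
  obtain ⟨k, hSk, hXk, hYk⟩ := h
  have hSX : S ≠ X := (ne_of_mem_of_not_mem X.2 hSl).symm
  have hk : mkLine hSX = k :=
    line_eq_of_mem_of_point_ne hSX (mkLine_ax hSX).1 (mkLine_ax hSX).2 hSk hXk
  have hkm := ne_of_mem_of_not_mem' (mkLine_ax hSX).1 hSm
  exact Subtype.ext (point_eq_of_mem_of_line_ne hkm (mkPoint_ax hkm).1 (mkPoint_ax hkm).2
    (hk ▸ hYk) Y.2)

theorem perspectivity_apply_of_mem {X : Rng P L l} (hX : (X : P) ∈ m) :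
    perspectivity hSl hSm X = ⟨X, hX⟩ := by
  have hSX : S ≠ X := (ne_of_mem_of_not_mem X.2 hSl).symm
  exact perspectivity_eq_of_col hSl hSm
    ⟨mkLine hSX, (mkLine_ax hSX).1, (mkLine_ax hSX).2, (mkLine_ax hSX).2⟩

end Perspectivity

/-- The center is `AA'·BB'`. -/
theorem exists_perspectivity_center {l m : L} {A B A' B' : P} (hA : A ∈ l) (hB : B ∈ l)
    (hA' : A' ∈ m) (hB' : B' ∈ m) (hAm : A ∉ m) (hBm : B ∉ m) (hA'l : A' ∉ l) (hB'l : B' ∉ l)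
    (hAB : A ≠ B) (hA'B' : A' ≠ B') :
    ∃ S : P, S ∉ l ∧ S ∉ m ∧ Col P L S A' A ∧ Col P L S B' B := by
  have hAA' : A ≠ A' := ne_of_mem_of_not_mem hA hA'l
  have hBB' : B ≠ B' := ne_of_mem_of_not_mem hB hB'l
  set a : L := mkLine hAA'
  set b : L := mkLine hBB'
  have hal : a ≠ l := ne_of_mem_of_not_mem' (mkLine_ax hAA').2 hA'l
  have ham : a ≠ m := ne_of_mem_of_not_mem' (mkLine_ax hAA').1 hAm
  have hbl : b ≠ l := ne_of_mem_of_not_mem' (mkLine_ax hBB').2 hB'l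
  have hbm : b ≠ m := ne_of_mem_of_not_mem' (mkLine_ax hBB').1 hBm
  have hab : a ≠ b := fun h =>
    hal (line_eq_of_mem_of_point_ne hAB (mkLine_ax hAA').1 (h ▸ (mkLine_ax hBB').1) hA hB)
  obtain ⟨hSa, hSb⟩ : (mkPoint hab : P) ∈ a ∧ (mkPoint hab : P) ∈ b := mkPoint_ax hab
  refine ⟨mkPoint hab, fun hSl => hAB ?_, fun hSm => hA'B' ?_,
    ⟨a, hSa, (mkLine_ax hAA').2, (mkLine_ax hAA').1⟩,
    ⟨b, hSb, (mkLine_ax hBB').2, (mkLine_ax hBB').1⟩⟩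
  · exact (point_eq_of_mem_of_line_ne hal hSa hSl (mkLine_ax hAA').1 hA).symm.trans
      (point_eq_of_mem_of_line_ne hbl hSb hSl (mkLine_ax hBB').1 hB)
  · exact (point_eq_of_mem_of_line_ne ham hSa hSm (mkLine_ax hAA').2 hA').symm.trans
      (point_eq_of_mem_of_line_ne hbm hSb hSm (mkLine_ax hBB').2 hB')

end ProjectivePlane

/-- **A projectivity between distinct ranges with a fixed point is a
perspectivity.** Let `f` be a projectivity from the range of a line `l` to the
range of a distinct line `m`, and suppose the common point `O = l·m` is fixed
by `f`.  Then `f` is a perspectivity: there is a point outside both `l` and `m`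
from which `f` is the projection of `l` onto `m`. -/
theorem projectivity_with_fixed_point_is_perspectivity
    [Configuration.ProjectivePlane P L]
    (h6 : LinesHaveAtLeast P L 6) (hT : AxiomT P L)
    (l m : L) (hlm : l ≠ m)
    (f : Rng P L l → Rng P L m) (hproj : IsProjectivity P L l m f)
    (O : P) (hOl : O ∈ l) (hOm : O ∈ m)
    (hfix : f ⟨O, hOl⟩ = ⟨O, hOm⟩) :
    IsPerspectivity P L l m f := by
  obtain ⟨A, B, hAB, hAO, hBO⟩ := h6.exists_two_ne (by norm_num) ⟨O, hOl⟩
  have hf := hproj.injective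
  have hfO {X : Rng P L l} (hX : X ≠ ⟨O, hOl⟩) : f X ≠ ⟨O, hOm⟩ := hfix ▸ hf.ne hX
  obtain ⟨S, hSl, hSm, hSA, hSB⟩ := exists_perspectivity_center A.2 B.2 (f A).2 (f B).2
    (val_notMem_of_ne_inter hlm hOl hOm hAO) (val_notMem_of_ne_inter hlm hOl hOm hBO)
    (val_notMem_of_ne_inter hlm.symm hOm hOl (hfO hAO))
    (val_notMem_of_ne_inter hlm.symm hOm hOl (hfO hBO))
    (Subtype.coe_ne_coe.mpr hAB) (Subtype.coe_ne_coe.mpr (hf.ne hAB))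
  have hg := isPerspectivity_perspectivity hSm hSl
  refine hg.of_leftInverse (hT.1 l _ (hproj.comp (.persp hg))
    ⟨⟨O, hOl⟩, A, B, hAO.symm, hBO.symm, hAB, ?_, ?_, ?_⟩)
  · exact (congrArg _ hfix).trans (perspectivity_apply_of_mem hSm hSl hOl)
  · exact perspectivity_eq_of_col hSm hSl hSA
  · exact perspectivity_eq_of_col hSm hSl hSB
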